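/- arXiv:2501.18026 — 3 statements merged into one kernel-verified Lean document; each statement's English description precedes it below -/
import Mathlib

section
/- For any finite signed Borel measure μ on a metric space S and any bounded Lipschitz function f on S, the measure f·μ (with density f with respect to μ) satisfies ‖f·μ‖_FM* ≤ 2‖f‖_FM ‖μ‖_FM*, where ‖μ‖_FM* := sup{∫ g dμ : g bounded Lipschitz, ‖g‖_∞ ≤ 1, |g|_L ≤ 1}. -/
open MeasureTheory Filter Topology

/-- Integration of a function against a finite signed measure, via the Jordan decomposition. -/
noncomputable def sintegral {S : Type*} [MeasurableSpace S] (μ : SignedMeasure S) (f : S → ℝ) : ℝ :=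
  (∫ x, f x ∂μ.toJordanDecomposition.posPart) - ∫ x, f x ∂μ.toJordanDecomposition.negPart

/-- Total variation norm of a finite signed measure: `‖μ‖_TV = μ⁺(S) + μ⁻(S)`. -/
noncomputable def tvNorm {S : Type*} [MeasurableSpace S] (μ : SignedMeasure S) : ℝ :=
  (μ.toJordanDecomposition.posPart Set.univ + μ.toJordanDecomposition.negPart Set.univ).toReal

/-- Fortet–Mourier norm: `‖μ‖_FM* = sup {∫ f dμ : f ∈ BL(S), ‖f‖_∞ ≤ 1, |f|_L ≤ 1}`. -/
noncomputable def fmNorm {S : Type*} [MeasurableSpace S] [MetricSpace S]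
    (μ : SignedMeasure S) : ℝ :=
  sSup {r | ∃ f : S → ℝ, (∀ x, |f x| ≤ 1) ∧ LipschitzWith 1 f ∧ r = sintegral μ f}

/-- The signed measure `g·μ` with density `g` with respect to the signed measure `μ`,
i.e. `E ↦ ∫_E g dμ`, defined via the Jordan decomposition of `μ`. -/
noncomputable def densitySM {S : Type*} [MeasurableSpace S]
    (μ : SignedMeasure S) (g : S → ℝ) : SignedMeasure S :=
  μ.toJordanDecomposition.posPart.withDensityᵥ g - μ.toJordanDecomposition.negPart.withDensityᵥ g

/-!
Integrating a test function `g` against `f·μ` gives `∫ f g dμ`. When `‖g‖_∞ ≤ 1` and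
`|g|_L ≤ 1`, the product `f g` is bounded by `B` and, writing
`f x g x - f y g y = f x (g x - g y) + (f x - f y) g y`, it is `(B + K)`-Lipschitz; so
`f g / (B + K)` is itself a test function for `‖μ‖_FM*`.
-/

open scoped NNReal

theorem LipschitzWith.mul_of_norm_le {α R : Type*} [PseudoMetricSpace α] [SeminormedRing R]
    {f g : α → R} {Kf Kg Bf Bg : ℝ≥0} (hf : LipschitzWith Kf f) (hg : LipschitzWith Kg g)
    (hfb : ∀ x, ‖f x‖ ≤ Bf) (hgb : ∀ x, ‖g x‖ ≤ Bg) :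
    LipschitzWith (Bf * Kg + Kf * Bg) fun x => f x * g x := by
  refine .of_dist_le_mul fun x y => ?_
  have hf' := hf.dist_le_mul x y
  have hg' := hg.dist_le_mul x y
  rw [dist_eq_norm] at hf' hg' ⊢
  calc ‖f x * g x - f y * g y‖ = ‖f x * (g x - g y) + (f x - f y) * g y‖ := by noncomm_ring
    _ ≤ ‖f x‖ * ‖g x - g y‖ + ‖f x - f y‖ * ‖g y‖ :=
        (norm_add_le _ _).trans (add_le_add (norm_mul_le _ _) (norm_mul_le _ _))
    _ ≤ Bf * (Kg * dist x y) + Kf * dist x y * Bg := by gcongr <;> simp_all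
    _ = ↑(Bf * Kg + Kf * Bg) * dist x y := by push_cast; ring

section Density

variable {S : Type*} [MeasurableSpace S]

theorem integral_withDensity_ofReal_sub {P : Measure S} [IsFiniteMeasure P] {f g : S → ℝ}
    (hf : Integrable f P) (hg : Measurable g) {C : ℝ} (hgb : ∀ x, |g x| ≤ C) :
    (∫ x, g x ∂(P.withDensity fun x => ENNReal.ofReal (f x))) -
        ∫ x, g x ∂(P.withDensity fun x => ENNReal.ofReal (-f x)) = ∫ x, f x * g x ∂P := by
  have hgb' : ∀ᵐ x ∂P, ‖g x‖ ≤ C := ae_of_all _ hgb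
  rw [integral_withDensity_eq_integral_toReal_smul₀ hf.1.aemeasurable.ennreal_ofReal
      (ae_of_all _ fun _ => ENNReal.ofReal_lt_top),
    integral_withDensity_eq_integral_toReal_smul₀
      (f := fun x => ENNReal.ofReal (-f x)) hf.1.aemeasurable.neg.ennreal_ofReal
      (ae_of_all _ fun _ => ENNReal.ofReal_lt_top)]
  simp only [ENNReal.toReal_ofReal', smul_eq_mul]
  rw [← integral_sub (hf.pos_part.mul_bdd hg.aestronglyMeasurable hgb')
      (hf.neg_part.mul_bdd hg.aestronglyMeasurable hgb')]
  simp only [← sub_mul, max_zero_sub_max_neg_zero_eq_self]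

theorem sintegral_toSignedMeasure_sub (A B : Measure S) [IsFiniteMeasure A] [IsFiniteMeasure B]
    {g : S → ℝ} (hg : Measurable g) {C : ℝ} (hgb : ∀ x, |g x| ≤ C) :
    sintegral (A.toSignedMeasure - B.toSignedMeasure) g = (∫ x, g x ∂A) - ∫ x, g x ∂B := by
  set j := (A.toSignedMeasure - B.toSignedMeasure).toJordanDecomposition
  have hj : j.posPart + B = A + j.negPart := by
    rw [← Measure.toSignedMeasure_eq_toSignedMeasure_iff, Measure.toSignedMeasure_add,
      Measure.toSignedMeasure_add, ← sub_eq_sub_iff_add_eq_add]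
    exact (A.toSignedMeasure - B.toSignedMeasure).toSignedMeasure_toJordanDecomposition
  have hint (m : Measure S) [IsFiniteMeasure m] : Integrable g m :=
    .of_bound hg.aestronglyMeasurable C (ae_of_all _ hgb)
  have := congrArg (fun m => ∫ x, g x ∂m) hj
  simp only [integral_add_measure (hint _) (hint _)] at this
  rw [sintegral]
  linarith

theorem sintegral_densitySM (μ : SignedMeasure S) {f g : S → ℝ} (hf : Measurable f) {Cf : ℝ}
    (hfb : ∀ x, |f x| ≤ Cf) (hg : Measurable g) {Cg : ℝ} (hgb : ∀ x, |g x| ≤ Cg) :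
    sintegral (densitySM μ f) g = sintegral μ fun x => f x * g x := by
  set P := μ.toJordanDecomposition.posPart
  set N := μ.toJordanDecomposition.negPart
  have hfi (m : Measure S) [IsFiniteMeasure m] : Integrable f m :=
    .of_bound hf.aestronglyMeasurable Cf (ae_of_all _ hfb)
  have := isFiniteMeasure_withDensity_ofReal (hfi P).2
  have := isFiniteMeasure_withDensity_ofReal (hfi P).neg.2
  have := isFiniteMeasure_withDensity_ofReal (hfi N).2
  have := isFiniteMeasure_withDensity_ofReal (hfi N).neg.2
  have hsplit : densitySM μ f =
      (P.withDensity (fun x => .ofReal (f x)) +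
          N.withDensity (fun x => .ofReal (-f x))).toSignedMeasure -
        (P.withDensity (fun x => .ofReal (-f x)) +
          N.withDensity (fun x => .ofReal (f x))).toSignedMeasure := by
    rw [densitySM, withDensityᵥ_eq_withDensity_pos_part_sub_withDensity_neg_part (hfi P),
      withDensityᵥ_eq_withDensity_pos_part_sub_withDensity_neg_part (hfi N),
      Measure.toSignedMeasure_add, Measure.toSignedMeasure_add]
    abel
  have hgi (m : Measure S) [IsFiniteMeasure m] : Integrable g m :=
    .of_bound hg.aestronglyMeasurable Cg (ae_of_all _ hgb)
  rw [hsplit, sintegral_toSignedMeasure_sub _ _ hg hgb, integral_add_measure (hgi _) (hgi _),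
    integral_add_measure (hgi _) (hgi _), sintegral,
    ← integral_withDensity_ofReal_sub (hfi P) hg hgb,
    ← integral_withDensity_ofReal_sub (hfi N) hg hgb]
  ring

end Density

section FortetMourier

variable {S : Type*} [MeasurableSpace S]

theorem sintegral_const_mul (μ : SignedMeasure S) (c : ℝ) (g : S → ℝ) :
    sintegral μ (fun x => c * g x) = c * sintegral μ g := by
  simp only [sintegral, integral_const_mul, mul_sub]

theorem sintegral_le_tvNorm (μ : SignedMeasure S) {g : S → ℝ} (hg : ∀ x, |g x| ≤ 1) :
    sintegral μ g ≤ tvNorm μ := by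
  replace hg : ∀ x, ‖g x‖ ≤ 1 := hg
  have hP := norm_integral_le_of_norm_le_const
    (μ := μ.toJordanDecomposition.posPart) (ae_of_all _ hg)
  have hN := norm_integral_le_of_norm_le_const
    (μ := μ.toJordanDecomposition.negPart) (ae_of_all _ hg)
  rw [Real.norm_eq_abs, one_mul, measureReal_def] at hP hN
  rw [sintegral, tvNorm, ENNReal.toReal_add (measure_ne_top _ _) (measure_ne_top _ _)]
  linarith [le_abs_self (∫ x, g x ∂μ.toJordanDecomposition.posPart),
    neg_abs_le (∫ x, g x ∂μ.toJordanDecomposition.negPart)]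

variable [MetricSpace S]

theorem sintegral_le_fmNorm (μ : SignedMeasure S) {g : S → ℝ} (hg : ∀ x, |g x| ≤ 1)
    (hgl : LipschitzWith 1 g) : sintegral μ g ≤ fmNorm μ :=
  le_csSup ⟨tvNorm μ, by rintro _ ⟨g, hg, -, rfl⟩; exact sintegral_le_tvNorm μ hg⟩
    ⟨g, hg, hgl, rfl⟩

theorem fmNorm_nonneg (μ : SignedMeasure S) : 0 ≤ fmNorm μ := by
  simpa [sintegral] using
    sintegral_le_fmNorm μ (g := fun _ => 0) (by simp) ((LipschitzWith.const 0).weaken zero_le_one)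

theorem sintegral_le_mul_fmNorm (μ : SignedMeasure S) {g : S → ℝ} {C : ℝ≥0}
    (hgb : ∀ x, |g x| ≤ C) (hgl : LipschitzWith C g) : sintegral μ g ≤ C * fmNorm μ := by
  rcases eq_or_ne C 0 with rfl | hC
  · have hg : g = fun x => 0 * g x := funext fun x => by simpa using hgb x
    rw [hg, sintegral_const_mul, NNReal.coe_zero, zero_mul, zero_mul]
  have hC' : (C : ℝ) ≠ 0 := NNReal.coe_ne_zero.2 hC
  have hg : g = fun x => (C : ℝ) * ((C : ℝ)⁻¹ * g x) :=
    funext fun x => (mul_inv_cancel_left₀ hC' _).symm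
  rw [hg, sintegral_const_mul]
  refine mul_le_mul_of_nonneg_left (sintegral_le_fmNorm μ (fun x => ?_) ?_) C.coe_nonneg
  · rw [abs_mul, abs_inv, NNReal.abs_eq, inv_mul_le_one₀ (by positivity)]
    exact hgb x
  · have := (lipschitzWith_smul (C : ℝ)⁻¹).comp hgl
    rwa [nnnorm_inv, NNReal.nnnorm_eq, inv_mul_cancel₀ hC] at this

end FortetMourier

/-- For a finite signed Borel measure `μ` and a bounded Lipschitz `f` (with
`‖f‖_∞ ≤ B`, `|f|_L ≤ K`), the measure `f·μ` satisfies `‖f·μ‖_FM* ≤ 2 max(B,K) ‖μ‖_FM*`. -/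
theorem densitySM_fmNorm_le {S : Type*} [MeasurableSpace S] [MetricSpace S] [BorelSpace S]
    (μ : SignedMeasure S) (f : S → ℝ) (B K : NNReal)
    (hfb : ∀ x, |f x| ≤ (B : ℝ)) (hfl : LipschitzWith K f) :
    fmNorm (densitySM μ f) ≤ 2 * max (B : ℝ) (K : ℝ) * fmNorm μ := by
  have hμ := fmNorm_nonneg μ
  refine Real.sSup_le ?_ (by positivity)
  rintro _ ⟨g, hg, hgl, rfl⟩
  have hfgb (x : S) : |f x * g x| ≤ (B + K : ℝ≥0) := by
    rw [abs_mul, NNReal.coe_add]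
    nlinarith [hfb x, hg x, abs_nonneg (f x), abs_nonneg (g x), K.coe_nonneg]
  have hfgl : LipschitzWith (B + K) fun x => f x * g x := by
    simpa using hfl.mul_of_norm_le hgl (Bg := 1) hfb hg
  rw [sintegral_densitySM μ hfl.continuous.measurable hfb hgl.continuous.measurable hg]
  calc _ ≤ ((B + K : ℝ≥0) : ℝ) * fmNorm μ := sintegral_le_mul_fmNorm μ hfgb hfgl
    _ ≤ 2 * max (B : ℝ) K * fmNorm μ := by
      gcongr
      push_cast
      linarith [le_max_left (B : ℝ) K, le_max_right (B : ℝ) K]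
end

section
/- Let ν be a finite positive measure on a measurable space (S, Σ) and 1 < p < ∞. A ν-integrable function f belongs to L^p(S, ν) if and only if there exists a constant C > 0 such that for every finite measurable partition A_1, …, A_m of S with ν(A_k) > 0 for all k, one has Σ_{k=1}^m ν(A_k)^{1−p} |∫_{A_k} f dν|^p ≤ C. Moreover, the smallest such constant C equals ‖f‖_p^p. -/
/-!
By Jensen's inequality each cell satisfies `ν(A)^{1-p} |∫_A f|^p = ν(A) |⨍_A f|^p ≤ ∫_A |f|^p`,
so every partition sum is at most `‖f‖_p^p`. Conversely, partition `S` according to the sign of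
`f` and the value of `|f|` rounded down to a multiple of `1/k` and capped at `k`: on each cell
`|⨍ f|` dominates the rounded value, so the partition sum dominates `∫ (rounded |f|)^p`, and
Fatou's lemma as `k → ∞` bounds `∫ |f|^p` by any bound of the partition sums.
-/

open MeasureTheory Filter Topology

noncomputable section

namespace MeasureTheory

variable {S : Type*} [MeasurableSpace S] {ν : Measure S} {p C : ℝ} {f g : S → ℝ}

def partitionSum (ν : Measure S) (p : ℝ) (f : S → ℝ) {ι : Type*} [Fintype ι]
    (A : ι → Set S) : ℝ :=
  ∑ k, (ν (A k)).toReal ^ (1 - p) * |∫ x in A k, f x ∂ν| ^ p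

def IsPartitionSumBound (ν : Measure S) (p : ℝ) (f : S → ℝ) (C : ℝ) : Prop :=
  ∀ (m : ℕ) (A : Fin m → Set S), (∀ k, MeasurableSet (A k)) →
    Pairwise (Function.onFun Disjoint A) → (⋃ k, A k) = Set.univ → (∀ k, 0 < ν (A k)) →
    partitionSum ν p f A ≤ C

/-- Cells of measure `0` or `∞` contribute `0` on both sides: `0 ^ (1 - p) = 0` as `p ≠ 1`. -/
theorem partitionSum_eq_sum_measureReal_mul_abs_setAverage_rpow (hp : p ≠ 1) {ι : Type*}
    [Fintype ι] (A : ι → Set S) :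
    partitionSum ν p f A = ∑ k, ν.real (A k) * |⨍ x in A k, f x ∂ν| ^ p := by
  refine Finset.sum_congr rfl fun k _ => ?_
  rw [setAverage_eq, smul_eq_mul, abs_mul, abs_inv, abs_of_nonneg measureReal_nonneg,
    ← measureReal_def]
  rcases measureReal_nonneg.eq_or_lt with h | h
  · rw [← h, Real.zero_rpow (sub_ne_zero.2 hp.symm), zero_mul, zero_mul]
  · rw [Real.mul_rpow (inv_nonneg.2 h.le) (abs_nonneg _), Real.inv_rpow h.le, Real.rpow_sub h,
      Real.rpow_one]
    field_simp

theorem partitionSum_congr_ae (hfg : f =ᵐ[ν] g) {ι : Type*} [Fintype ι] (A : ι → Set S) :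
    partitionSum ν p f A = partitionSum ν p g A :=
  Finset.sum_congr rfl fun _ _ => by rw [integral_congr_ae (ae_restrict_of_ae hfg)]

theorem toReal_eLpNorm_ofReal_rpow (hp : 0 < p) (hf : AEStronglyMeasurable f ν) :
    (eLpNorm f (ENNReal.ofReal p) ν).toReal ^ p = ∫ x, |f x| ^ p ∂ν := by
  rw [toReal_eLpNorm hf, lpNorm_eq_integral_norm_rpow_toReal (by simpa using hp)
    ENNReal.ofReal_ne_top hf, ENNReal.toReal_ofReal hp.le,
    Real.rpow_inv_rpow (integral_nonneg fun x => by positivity) hp.ne']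
  rfl

theorem measureReal_mul_abs_setAverage_rpow_le (hp : 1 ≤ p) {A : Set S}
    (hf : IntegrableOn f A ν) (hfp : IntegrableOn (fun x => |f x| ^ p) A ν) :
    ν.real A * |⨍ x in A, f x ∂ν| ^ p ≤ ∫ x in A, |f x| ^ p ∂ν := by
  rcases measureReal_nonneg.eq_or_lt with h | h
  · rw [← h, zero_mul]
    exact integral_nonneg fun x => by positivity
  obtain ⟨hA0, hAtop⟩ := ENNReal.toReal_pos_iff.1 h
  have jensen : (⨍ x in A, |f x| ∂ν) ^ p ≤ ⨍ x in A, |f x| ^ p ∂ν :=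
    (convexOn_rpow hp).map_set_average_le (Real.continuous_rpow_const (by linarith)).continuousOn
      isClosed_Ici hA0.ne' hAtop.ne (ae_of_all _ fun x => abs_nonneg (f x)) hf.abs hfp
  have habs : |⨍ x in A, f x ∂ν| ≤ ⨍ x in A, |f x| ∂ν := by
    simp only [setAverage_eq, smul_eq_mul, abs_mul, abs_inv, abs_of_pos h]
    exact mul_le_mul_of_nonneg_left abs_integral_le_integral_abs (inv_nonneg.2 h.le)
  calc ν.real A * |⨍ x in A, f x ∂ν| ^ p ≤ ν.real A * ⨍ x in A, |f x| ^ p ∂ν :=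
        mul_le_mul_of_nonneg_left
          ((Real.rpow_le_rpow (abs_nonneg _) habs (by linarith)).trans jensen) h.le
    _ = ∫ x in A, |f x| ^ p ∂ν := by rw [setAverage_eq, smul_eq_mul, mul_inv_cancel_left₀ h.ne']

theorem partitionSum_le_integral_abs_rpow (hp : 1 < p) (hf : Integrable f ν)
    (hfp : MemLp f (ENNReal.ofReal p) ν) {ι : Type*} [Fintype ι] {A : ι → Set S}
    (hA : ∀ k, MeasurableSet (A k)) (hdisj : Pairwise (Function.onFun Disjoint A))
    (hcover : (⋃ k, A k) = Set.univ) :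
    partitionSum ν p f A ≤ ∫ x, |f x| ^ p ∂ν := by
  have hfp' : Integrable (fun x => |f x| ^ p) ν := by
    simpa [ENNReal.toReal_ofReal (by linarith : 0 ≤ p)] using
      hfp.integrable_norm_rpow (ENNReal.ofReal_pos.2 (by linarith)).ne' ENNReal.ofReal_ne_top
  rw [partitionSum_eq_sum_measureReal_mul_abs_setAverage_rpow hp.ne', ← setIntegral_univ,
    ← hcover, integral_iUnion_fintype hA hdisj fun k => hfp'.integrableOn]
  exact Finset.sum_le_sum fun k _ =>
    measureReal_mul_abs_setAverage_rpow_le hp.le hf.integrableOn hfp'.integrableOn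

theorem le_abs_setAverage_of_forall_le [IsFiniteMeasure ν] {B : Set S} (hB : MeasurableSet B)
    (hB0 : ν B ≠ 0) (hg : IntegrableOn g B ν) {c : ℝ}
    (h : (∀ x ∈ B, c ≤ g x) ∨ (∀ x ∈ B, c ≤ -g x)) : c ≤ |⨍ x in B, g x ∂ν| := by
  have hpos : 0 < ν.real B := ENNReal.toReal_pos hB0 (measure_ne_top ν B)
  rw [setAverage_eq, smul_eq_mul, abs_mul, abs_inv, abs_of_pos hpos, le_inv_mul_iff₀ hpos,
    mul_comm]
  rcases h with h | h
  · exact (setIntegral_ge_of_const_le_real hB (measure_ne_top ν B) h hg).trans (le_abs_self _)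
  · calc c * ν.real B ≤ ∫ x in B, -g x ∂ν :=
          setIntegral_ge_of_const_le_real hB (measure_ne_top ν B) h hg.neg
      _ ≤ |∫ x in B, g x ∂ν| := by rw [integral_neg]; exact neg_le_abs _

theorem lintegral_ofReal_rpow_comp_le [IsFiniteMeasure ν] (hp : 0 ≤ p) {ι : Type*} [Fintype ι]
    [MeasurableSpace ι] [MeasurableSingletonClass ι] {φ : S → ι} (hφ : Measurable φ)
    (hg : Integrable g ν) {c : ι → ℝ} (hc : ∀ i, 0 ≤ c i)
    (hsign : ∀ i, (∀ x ∈ φ ⁻¹' {i}, c i ≤ g x) ∨ (∀ x ∈ φ ⁻¹' {i}, c i ≤ -g x)) :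
    ∫⁻ x, ENNReal.ofReal (c (φ x) ^ p) ∂ν ≤
      ENNReal.ofReal (∑ i, ν.real (φ ⁻¹' {i}) * |⨍ x in φ ⁻¹' {i}, g x ∂ν| ^ p) := by
  rw [← lintegral_map (f := fun i => ENNReal.ofReal (c i ^ p)) (measurable_of_finite _) hφ,
    lintegral_fintype, ENNReal.ofReal_sum_of_nonneg fun i _ => by positivity]
  refine Finset.sum_le_sum fun i _ => ?_
  rw [Measure.map_apply hφ (measurableSet_singleton i)]
  rcases eq_or_ne (ν (φ ⁻¹' {i})) 0 with h | h
  · rw [h, mul_zero]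
    exact zero_le
  rw [← ENNReal.ofReal_toReal (measure_ne_top ν _),
    ← ENNReal.ofReal_mul (Real.rpow_nonneg (hc i) p), ← measureReal_def, mul_comm]
  refine ENNReal.ofReal_le_ofReal (mul_le_mul_of_nonneg_left ?_ measureReal_nonneg)
  exact Real.rpow_le_rpow (hc i) (le_abs_setAverage_of_forall_le
    (hφ (measurableSet_singleton i)) h hg.integrableOn (hsign i)) hp

theorem IsPartitionSumBound.partitionSum_le (H : IsPartitionSumBound ν p f C) {ι : Type*}
    [Fintype ι] {A : ι → Set S} (hA : ∀ i, MeasurableSet (A i))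
    (hdisj : Pairwise (Function.onFun Disjoint A)) (hcover : (⋃ i, A i) = Set.univ)
    (hpos : ∀ i, 0 < ν (A i)) : partitionSum ν p f A ≤ C := by
  let e := (Fintype.equivFin ι).symm
  have := H _ (A ∘ e) (fun k => hA _) (hdisj.comp_of_injective e.injective)
    (by rw [← hcover]; exact e.surjective.iUnion_comp A) (fun k => hpos _)
  calc partitionSum ν p f A = partitionSum ν p f (A ∘ e) :=
        (e.sum_comp fun i => (ν (A i)).toReal ^ (1 - p) * |∫ x in A i, f x ∂ν| ^ p).symm
    _ ≤ C := this

theorem ae_measure_preimage_singleton_pos {κ : Type*} [Countable κ] (ψ : S → κ) :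
    ∀ᵐ x ∂ν, 0 < ν (ψ ⁻¹' {ψ x}) := by
  have : ∀ᵐ x ∂ν, ∀ i, ψ x = i → 0 < ν (ψ ⁻¹' {i}) := ae_all_iff.2 fun i => by
    rcases eq_zero_or_pos (ν (ψ ⁻¹' {i})) with h | h
    · exact (measure_eq_zero_iff_ae_notMem.1 h).mono fun x hx hxi => absurd hxi hx
    · exact ae_of_all _ fun _ _ => h
  filter_upwards [this] with x hx using hx _ rfl

/-- Null fibers are merged into a fiber of positive measure, which changes no term of the sum. -/
theorem IsPartitionSumBound.partitionSum_fiber_le (hp : p ≠ 1) (hC : 0 ≤ C)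
    (H : IsPartitionSumBound ν p f C) {κ : Type*} [Fintype κ] [MeasurableSpace κ]
    [MeasurableSingletonClass κ] {ψ : S → κ} (hψ : Measurable ψ) :
    partitionSum ν p f (fun i => ψ ⁻¹' {i}) ≤ C := by
  classical
  let P := {i // 0 < ν (ψ ⁻¹' {i})}
  have hsum : partitionSum ν p f (fun i => ψ ⁻¹' {i}) =
      ∑ j : P, (ν (ψ ⁻¹' {j.1})).toReal ^ (1 - p) * |∫ x in ψ ⁻¹' {j.1}, f x ∂ν| ^ p := by
    rw [partitionSum, ← Finset.sum_filter_of_ne (p := fun i => 0 < ν (ψ ⁻¹' {i})),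
      Finset.sum_subtype (p := fun i => 0 < ν (ψ ⁻¹' {i})) _ fun i => by simp]
    intro i _ hi
    by_contra h0
    simp [nonpos_iff_eq_zero.1 (not_lt.1 h0), Real.zero_rpow (sub_ne_zero.2 hp.symm)] at hi
  rw [hsum]
  rcases isEmpty_or_nonempty P with _ | ⟨⟨i₀, hi₀⟩⟩
  · simpa using hC
  let r : κ → P := fun i => if h : 0 < ν (ψ ⁻¹' {i}) then ⟨i, h⟩ else ⟨i₀, hi₀⟩
  have hfiber (j : P) : (r ∘ ψ) ⁻¹' {j} =ᵐ[ν] ψ ⁻¹' {j.1} := by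
    refine eventuallyEq_set.2 ((ae_measure_preimage_singleton_pos ψ).mono fun x hx => ?_)
    simp only [Set.mem_preimage, Function.comp_apply, Set.mem_singleton_iff, r, dif_pos hx]
    exact Subtype.ext_iff
  calc ∑ j : P, (ν (ψ ⁻¹' {j.1})).toReal ^ (1 - p) * |∫ x in ψ ⁻¹' {j.1}, f x ∂ν| ^ p
      = partitionSum ν p f (fun j => (r ∘ ψ) ⁻¹' {j}) :=
        Finset.sum_congr rfl fun j _ => by
          rw [measure_congr (hfiber j), setIntegral_congr_set (hfiber j)]
    _ ≤ C :=
        H.partitionSum_le (fun j => show MeasurableSet (ψ ⁻¹' (r ⁻¹' {j})) from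
          hψ (Set.toFinite _).measurableSet)
          (pairwise_disjoint_fiber _)
          (by rw [← Set.preimage_iUnion, Set.iUnion_of_singleton, Set.preimage_univ])
          fun j => (measure_congr (hfiber j)).symm ▸ j.2

def levelIndex (k : ℕ) (y : ℝ) : Fin (k ^ 2 + 1) :=
  ⟨min ⌊|y| * k⌋₊ (k ^ 2), Nat.lt_succ_of_le (min_le_right _ _)⟩

theorem measurable_levelIndex (k : ℕ) : Measurable (levelIndex k) :=
  show Measurable ((fun n : ℕ => (⟨min n (k ^ 2), Nat.lt_succ_of_le (min_le_right _ _)⟩ :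
      Fin (k ^ 2 + 1))) ∘ fun y : ℝ => ⌊|y| * k⌋₊) from
    measurable_from_nat.comp (measurable_id.abs.mul_const _).nat_floor

def levelValue (k : ℕ) (y : ℝ) : ℝ := ((levelIndex k y : ℕ) : ℝ) / k

theorem measurable_levelValue (k : ℕ) : Measurable (levelValue k) :=
  show Measurable ((fun j : Fin (k ^ 2 + 1) => ((j : ℕ) : ℝ) / k) ∘ levelIndex k) from
    (measurable_of_finite _).comp (measurable_levelIndex k)

theorem levelValue_le_abs (k : ℕ) (y : ℝ) : levelValue k y ≤ |y| := by
  rcases k.eq_zero_or_pos with rfl | hk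
  · simp [levelValue]
  rw [levelValue, div_le_iff₀ (by positivity)]
  calc ((levelIndex k y : ℕ) : ℝ) ≤ ⌊|y| * k⌋₊ := by exact_mod_cast min_le_left _ _
    _ ≤ |y| * k := Nat.floor_le (by positivity)

theorem tendsto_levelValue (y : ℝ) : Tendsto (fun k => levelValue k y) atTop (𝓝 |y|) := by
  refine ((tendsto_nat_floor_mul_div_atTop (abs_nonneg y)).comp
    tendsto_natCast_atTop_atTop).congr' ?_
  filter_upwards [eventually_gt_atTop ⌈|y|⌉₊] with k hk
  have hfloor : ⌊|y| * k⌋₊ ≤ k ^ 2 := by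
    refine Nat.floor_le_of_le ?_
    have : |y| ≤ k := (Nat.le_ceil _).trans (by exact_mod_cast hk.le)
    push_cast
    nlinarith [abs_nonneg y]
  simp [levelValue, levelIndex, min_eq_left hfloor]

theorem IsPartitionSumBound.lintegral_ofReal_abs_rpow_le_of_measurable [IsFiniteMeasure ν]
    (hp : 1 < p) (hC : 0 ≤ C) (H : IsPartitionSumBound ν p g C) (hg : Measurable g)
    (hgi : Integrable g ν) :
    ∫⁻ x, ENNReal.ofReal (|g x| ^ p) ∂ν ≤ ENNReal.ofReal C := by
  have hlevel (k : ℕ) : ∫⁻ x, ENNReal.ofReal (levelValue k (g x) ^ p) ∂ν ≤ ENNReal.ofReal C := by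
    have hφ : Measurable fun x => (levelIndex k (g x), decide (0 ≤ g x)) :=
      ((measurable_levelIndex k).comp hg).prodMk <| measurable_to_countable' fun b => by
        cases b
        · simpa [Set.preimage] using measurableSet_lt hg measurable_const
        · simpa [Set.preimage] using measurableSet_le measurable_const hg
    refine (lintegral_ofReal_rpow_comp_le (c := fun i => ((i.1 : ℕ) : ℝ) / k) (by linarith) hφ
      hgi (fun i => by positivity) ?_).trans (ENNReal.ofReal_le_ofReal ?_)
    · rintro ⟨j, _ | _⟩
      · refine .inr fun x hx => ?_
        obtain ⟨rfl, hneg⟩ : levelIndex k (g x) = j ∧ ¬ 0 ≤ g x := by simpa using hx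
        exact (levelValue_le_abs k (g x)).trans_eq (abs_of_neg (not_le.1 hneg))
      · refine .inl fun x hx => ?_
        obtain ⟨rfl, hnonneg⟩ : levelIndex k (g x) = j ∧ 0 ≤ g x := by simpa using hx
        exact (levelValue_le_abs k (g x)).trans_eq (abs_of_nonneg hnonneg)
    · rw [← partitionSum_eq_sum_measureReal_mul_abs_setAverage_rpow hp.ne']
      exact H.partitionSum_fiber_le hp.ne' hC hφ
  have hlim (x : S) : Tendsto (fun k => ENNReal.ofReal (levelValue k (g x) ^ p)) atTop
      (𝓝 (ENNReal.ofReal (|g x| ^ p))) :=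
    (ENNReal.continuous_ofReal.tendsto _).comp
      ((tendsto_levelValue (g x)).rpow_const (Or.inr (by linarith)))
  calc ∫⁻ x, ENNReal.ofReal (|g x| ^ p) ∂ν
      = ∫⁻ x, liminf (fun k => ENNReal.ofReal (levelValue k (g x) ^ p)) atTop ∂ν :=
        lintegral_congr fun x => (hlim x).liminf_eq.symm
    _ ≤ liminf (fun k => ∫⁻ x, ENNReal.ofReal (levelValue k (g x) ^ p) ∂ν) atTop :=
        lintegral_liminf_le fun k =>
          (((measurable_levelValue k).comp hg).pow_const p).ennreal_ofReal
    _ ≤ ENNReal.ofReal C := liminf_le_of_frequently_le' (Frequently.of_forall hlevel)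

theorem IsPartitionSumBound.congr_ae (H : IsPartitionSumBound ν p f C) (hfg : f =ᵐ[ν] g) :
    IsPartitionSumBound ν p g C := fun m A hA hdisj hcover hpos => by
  rw [← partitionSum_congr_ae hfg]
  exact H m A hA hdisj hcover hpos

theorem IsPartitionSumBound.lintegral_ofReal_abs_rpow_le [IsFiniteMeasure ν] (hp : 1 < p)
    (hC : 0 ≤ C) (H : IsPartitionSumBound ν p f C) (hf : Integrable f ν) :
    ∫⁻ x, ENNReal.ofReal (|f x| ^ p) ∂ν ≤ ENNReal.ofReal C := by
  have hfg := hf.aemeasurable.ae_eq_mk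
  calc ∫⁻ x, ENNReal.ofReal (|f x| ^ p) ∂ν
      = ∫⁻ x, ENNReal.ofReal (|hf.aemeasurable.mk f x| ^ p) ∂ν :=
        lintegral_congr_ae (hfg.mono fun x hx => by simp only [hx])
    _ ≤ ENNReal.ofReal C :=
        (H.congr_ae hfg).lintegral_ofReal_abs_rpow_le_of_measurable hp hC
          hf.aemeasurable.measurable_mk (hf.congr hfg)

theorem IsPartitionSumBound.memLp [IsFiniteMeasure ν] (hp : 1 < p) (hC : 0 ≤ C)
    (H : IsPartitionSumBound ν p f C) (hf : Integrable f ν) : MemLp f (ENNReal.ofReal p) ν := by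
  have hp0 : 0 < p := by linarith
  rw [← integrable_norm_rpow_iff hf.aestronglyMeasurable (by simpa using hp0)
    ENNReal.ofReal_ne_top, ENNReal.toReal_ofReal hp0.le]
  refine ⟨by fun_prop (disch := linarith),
    (hasFiniteIntegral_iff_ofReal (ae_of_all _ fun x => by positivity)).2 ?_⟩
  exact (H.lintegral_ofReal_abs_rpow_le hp hC hf).trans_lt ENNReal.ofReal_lt_top

theorem IsPartitionSumBound.integral_abs_rpow_le [IsFiniteMeasure ν] (hp : 1 < p) (hC : 0 ≤ C)
    (H : IsPartitionSumBound ν p f C) (hf : Integrable f ν) : ∫ x, |f x| ^ p ∂ν ≤ C := by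
  rw [integral_eq_lintegral_of_nonneg_ae (ae_of_all _ fun x => by positivity)
    (by fun_prop (disch := linarith))]
  exact ENNReal.toReal_le_of_le_ofReal hC (H.lintegral_ofReal_abs_rpow_le hp hC hf)

end MeasureTheory

/-- For a finite positive measure `ν` and `1 < p < ∞`, an integrable `f` is in
`L^p(ν)` iff there is `C > 0` bounding `∑_k ν(A_k)^{1-p} |∫_{A_k} f dν|^p` over all finite
measurable partitions with cells of positive measure; and the least such constant is
`‖f‖_p^p`. -/
theorem memLp_iff_partition_sums_bounded {S : Type*} [MeasurableSpace S]
    (ν : Measure S) [IsFiniteMeasure ν] (p : ℝ) (hp : 1 < p)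
    (f : S → ℝ) (hf : Integrable f ν) :
    (MemLp f (ENNReal.ofReal p) ν ↔
      ∃ C > (0 : ℝ), ∀ (m : ℕ) (A : Fin m → Set S), (∀ k, MeasurableSet (A k)) →
        Pairwise (Function.onFun Disjoint A) → (⋃ k, A k) = Set.univ →
        (∀ k, 0 < ν (A k)) →
        ∑ k, (ν (A k)).toReal ^ (1 - p) * |∫ x in A k, f x ∂ν| ^ p ≤ C) ∧
    (MemLp f (ENNReal.ofReal p) ν →
      IsLeast {C : ℝ | 0 ≤ C ∧ ∀ (m : ℕ) (A : Fin m → Set S), (∀ k, MeasurableSet (A k)) →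
          Pairwise (Function.onFun Disjoint A) → (⋃ k, A k) = Set.univ →
          (∀ k, 0 < ν (A k)) →
          ∑ k, (ν (A k)).toReal ^ (1 - p) * |∫ x in A k, f x ∂ν| ^ p ≤ C}
        ((eLpNorm f (ENNReal.ofReal p) ν).toReal ^ p)) := by
  have hnorm : (eLpNorm f (ENNReal.ofReal p) ν).toReal ^ p = ∫ x, |f x| ^ p ∂ν :=
    toReal_eLpNorm_ofReal_rpow (by linarith) hf.aestronglyMeasurable
  have hbound (hfp : MemLp f (ENNReal.ofReal p) ν) :
      IsPartitionSumBound ν p f ((eLpNorm f (ENNReal.ofReal p) ν).toReal ^ p) := by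
    intro m A hA hdisj hcover _
    rw [hnorm]
    exact partitionSum_le_integral_abs_rpow hp hf hfp hA hdisj hcover
  refine ⟨⟨fun hfp => ?_, fun ⟨C, hC, H⟩ => IsPartitionSumBound.memLp hp hC.le H hf⟩,
    fun hfp => ⟨⟨by positivity, hbound hfp⟩, fun C ⟨hC, H⟩ => ?_⟩⟩
  · refine ⟨(eLpNorm f (ENNReal.ofReal p) ν).toReal ^ p + 1, by positivity, ?_⟩
    intro m A hA hdisj hcover hpos
    exact (hbound hfp m A hA hdisj hcover hpos).trans (lt_add_one _).le
  · rw [hnorm]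
    exact IsPartitionSumBound.integral_abs_rpow_le hp hC H hf
end
end

section
/- Let v be a time-dependent vector field on ℝ^d satisfying (V1)–(V3), with flow Φ^v and push-forward operators P^v_{t₀,t} μ := (Φ^v_{t₀,t})_# μ. Then for any finite signed Borel measure μ, any t₀ ≥ 0 and any bounded interval I ⊂ [t₀, ∞), the map t ↦ P^v_{t₀,t} μ is Lipschitz for the Fortet–Mourier norm: ‖P^v_{t₀,t}μ − P^v_{t₀,s}μ‖_FM* ≤ C'_I ‖μ‖_TV |t − s| for all s, t ∈ I, where C'_I = sup_{t∈I} ‖v_t‖_∞ · exp(∫_{t₀}^{sup I} |v_τ|_L dτ). -/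
open MeasureTheory Filter Topology

/-! Testing `P_t μ - P_s μ` against a 1-Lipschitz `f` gives `∫ (f ∘ Φ_t - f ∘ Φ_s) dμ` (split
along the Jordan decomposition of `μ`), and `|f ∘ Φ_t - f ∘ Φ_s| ≤ sup ‖v‖ · |t - s|` because
`Φ` moves with velocity `v`; the exponential factor is at least `1`. Grönwall's inequality enters
only to make the flow maps continuous, hence measurable: a push-forward along a non-measurable
map is the junk value `0`. -/

open Set NNReal

theorem MeasureTheory.Measure.toSignedMeasure_map {α β : Type*} [MeasurableSpace α]
    [MeasurableSpace β] (μ : Measure α) [IsFiniteMeasure μ] {T : α → β} (hT : Measurable T) :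
    (μ.map T).toSignedMeasure = μ.toSignedMeasure.map T := by
  ext E hE
  rw [VectorMeasure.map_apply _ hT hE, toSignedMeasure_apply_measurable hE,
    toSignedMeasure_apply_measurable (hT hE), measureReal_def, measureReal_def,
    Measure.map_apply hT hE]

section SignedIntegral

variable {α β : Type*} [MeasurableSpace α] [MeasurableSpace β]

theorem integrable_of_abs_le {μ : Measure α} [IsFiniteMeasure μ] {f : α → ℝ} {C : ℝ}
    (hf : Measurable f) (hC : ∀ x, |f x| ≤ C) : Integrable f μ :=
  .of_bound hf.aestronglyMeasurable C (ae_of_all _ hC)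

theorem sintegral_toSignedMeasure_sub_s14 (μ ν : Measure α) [IsFiniteMeasure μ] [IsFiniteMeasure ν]
    {f : α → ℝ} {C : ℝ} (hf : Measurable f) (hC : ∀ x, |f x| ≤ C) :
    sintegral (μ.toSignedMeasure - ν.toSignedMeasure) f = ∫ x, f x ∂μ - ∫ x, f x ∂ν := by
  set j := (μ.toSignedMeasure - ν.toSignedMeasure).toJordanDecomposition
  have hj : j.posPart + ν = μ + j.negPart := by
    rw [← Measure.toSignedMeasure_eq_toSignedMeasure_iff, Measure.toSignedMeasure_add,
      Measure.toSignedMeasure_add, ← sub_eq_sub_iff_add_eq_add]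
    exact (μ.toSignedMeasure - ν.toSignedMeasure).toSignedMeasure_toJordanDecomposition
  have hint := congrArg (fun m => ∫ x, f x ∂m) hj
  simp only [integral_add_measure (integrable_of_abs_le hf hC) (integrable_of_abs_le hf hC)] at hint
  rw [sintegral]
  linarith

theorem sintegral_map_sub_map (μ : SignedMeasure α) {T U : α → β} (hT : Measurable T)
    (hU : Measurable U) {f : β → ℝ} {C : ℝ} (hf : Measurable f) (hC : ∀ y, |f y| ≤ C) :
    sintegral (μ.map T - μ.map U) f = sintegral μ (fun x => f (T x) - f (U x)) := by
  set p := μ.toJordanDecomposition.posPart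
  set n := μ.toJordanDecomposition.negPart
  have hmap : ∀ W : α → β, Measurable W →
      μ.map W = (p.map W).toSignedMeasure - (n.map W).toSignedMeasure := fun W hW => by
    rw [p.toSignedMeasure_map hW, n.toSignedMeasure_map hW]
    show _ = VectorMeasure.mapGm W p.toSignedMeasure - VectorMeasure.mapGm W n.toSignedMeasure
    rw [← map_sub]
    exact congrArg (VectorMeasure.map · W) μ.toSignedMeasure_toJordanDecomposition.symm
  have hdiff : μ.map T - μ.map U =
      (p.map T + n.map U).toSignedMeasure - (n.map T + p.map U).toSignedMeasure := by
    rw [hmap T hT, hmap U hU, Measure.toSignedMeasure_add, Measure.toSignedMeasure_add]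
    abel
  have hcomp : ∀ W : α → β, Measurable W → ∀ (m : Measure α) [IsFiniteMeasure m],
      Integrable (fun x => f (W x)) m := fun W hW _ _ =>
    integrable_of_abs_le (hf.comp hW) fun x => hC (W x)
  rw [hdiff, sintegral_toSignedMeasure_sub_s14 _ _ hf hC, sintegral,
    integral_add_measure (integrable_of_abs_le hf hC) (integrable_of_abs_le hf hC),
    integral_add_measure (integrable_of_abs_le hf hC) (integrable_of_abs_le hf hC),
    integral_map hT.aemeasurable hf.aestronglyMeasurable,
    integral_map hT.aemeasurable hf.aestronglyMeasurable,
    integral_map hU.aemeasurable hf.aestronglyMeasurable,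
    integral_map hU.aemeasurable hf.aestronglyMeasurable,
    integral_sub (hcomp T hT p) (hcomp U hU p), integral_sub (hcomp T hT n) (hcomp U hU n)]
  ring

theorem sintegral_le_mul_tvNorm (μ : SignedMeasure α) {g : α → ℝ} {δ : ℝ}
    (hg : ∀ x, |g x| ≤ δ) : sintegral μ g ≤ δ * tvNorm μ := by
  set p := μ.toJordanDecomposition.posPart
  set n := μ.toJordanDecomposition.negPart
  have hp : ‖∫ x, g x ∂p‖ ≤ δ * p.real univ := norm_integral_le_of_norm_le_const (ae_of_all _ hg)
  have hn : ‖∫ x, g x ∂n‖ ≤ δ * n.real univ := norm_integral_le_of_norm_le_const (ae_of_all _ hg)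
  rw [sintegral, tvNorm, ENNReal.toReal_add (measure_ne_top p _) (measure_ne_top n _)]
  rw [Real.norm_eq_abs, measureReal_def] at hp hn
  linarith [abs_le.mp hp, abs_le.mp hn]

theorem fmNorm_map_sub_map_le {S : Type*} [MeasurableSpace S] [MetricSpace S]
    [OpensMeasurableSpace S] (μ : SignedMeasure α) {T U : α → S} (hT : Measurable T)
    (hU : Measurable U) {δ : ℝ} (hδ : ∀ x, dist (T x) (U x) ≤ δ) :
    fmNorm (μ.map T - μ.map U) ≤ δ * tvNorm μ := by
  refine csSup_le ⟨0, fun _ => 0, by simp, LipschitzWith.const' 0, by simp [sintegral]⟩ ?_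
  rintro _ ⟨f, hf_le, hf_lip, rfl⟩
  rw [sintegral_map_sub_map μ hT hU hf_lip.continuous.measurable hf_le]
  refine sintegral_le_mul_tvNorm μ fun x => ?_
  simpa [← Real.dist_eq] using (hf_lip.dist_le_mul (T x) (U x)).trans (by simpa using hδ x)

end SignedIntegral

section Flow

variable {E : Type*} [NormedAddCommGroup E] [NormedSpace ℝ E] {v : ℝ → E → E} {φ : ℝ → E → E}

theorem lipschitzWith_flow {K : ℝ≥0} {t₀ T : ℝ} (hT : t₀ ≤ T)
    (hv : ∀ t ∈ Ico t₀ T, LipschitzWith K (v t))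
    (hφ : ∀ x, ∀ t ∈ Icc t₀ T, HasDerivAt (fun u => φ u x) (v t (φ t x)) t)
    (hφ₀ : ∀ x, φ t₀ x = x) :
    LipschitzWith (Real.exp (K * (T - t₀))).toNNReal (φ T) := by
  refine LipschitzWith.of_dist_le' fun x y => ?_
  have hcont : ∀ z, ContinuousOn (fun u => φ u z) (Icc t₀ T) := fun z u hu =>
    (hφ z u hu).continuousAt.continuousWithinAt
  have hderiv : ∀ z, ∀ t ∈ Ico t₀ T,
      HasDerivWithinAt (fun u => φ u z) (v t (φ t z)) (Ici t) t := fun z t ht =>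
    (hφ z t (Ico_subset_Icc_self ht)).hasDerivWithinAt
  have := dist_le_of_trajectories_ODE_of_mem (s := fun _ => univ)
    (fun t ht => (hv t ht).lipschitzOnWith) (hcont x) (hderiv x) (fun _ _ => trivial)
    (hcont y) (hderiv y) (fun _ _ => trivial) (by rw [hφ₀, hφ₀]) T ⟨hT, le_rfl⟩
  rwa [mul_comm] at this

end Flow

theorem pushforward_flow_lipschitz_in_time_general {d : ℕ}
    (v : ℝ → EuclideanSpace ℝ (Fin d) → EuclideanSpace ℝ (Fin d))
    (L : ℝ → NNReal) (hLc : Continuous fun τ => (L τ : ℝ))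
    (hLip : ∀ τ, LipschitzWith (L τ) (v τ))
    (Φ : ℝ → ℝ → EuclideanSpace ℝ (Fin d) → EuclideanSpace ℝ (Fin d))
    (hΦ0 : ∀ s x₀, Φ s s x₀ = x₀)
    (hΦode : ∀ s x₀ t, s ≤ t → HasDerivAt (fun u => Φ s u x₀) (v t (Φ s t x₀)) t)
    (t₀ a b Cv : ℝ) (hta : t₀ ≤ a) (hab : a ≤ b)
    (hCv : ∀ t ∈ Set.Icc a b, ∀ x, ‖v t x‖ ≤ Cv)
    (μ : SignedMeasure (EuclideanSpace ℝ (Fin d))) :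
    ∀ s ∈ Set.Icc a b, ∀ t ∈ Set.Icc a b,
      fmNorm (μ.map (Φ t₀ t) - μ.map (Φ t₀ s)) ≤
        (Cv * Real.exp (∫ τ in t₀..b, (L τ : ℝ))) * tvNorm μ * |t - s| := by
  intro s hs t ht
  obtain ⟨τ₀, -, hτ₀⟩ :=
    isCompact_Icc.exists_isMaxOn (nonempty_Icc.2 (hta.trans hab)) hLc.continuousOn
  have hmeas : ∀ r ∈ Icc a b, Measurable (Φ t₀ r) := fun r hr =>
    (lipschitzWith_flow (hta.trans hr.1)
      (fun τ hτ => (hLip τ).weaken (NNReal.coe_le_coe.mp (hτ₀ ⟨hτ.1, hτ.2.le.trans hr.2⟩)))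
      (fun x τ hτ => hΦode t₀ x τ hτ.1) (hΦ0 t₀)).continuous.measurable
  have hdisp : ∀ x, dist (Φ t₀ t x) (Φ t₀ s x) ≤ Cv * |t - s| := fun x => by
    simpa [dist_eq_norm, Real.norm_eq_abs] using
      (convex_Icc a b).norm_image_sub_le_of_norm_hasDerivWithin_le
        (fun τ hτ => (hΦode t₀ x τ (hta.trans hτ.1)).hasDerivWithinAt)
        (fun τ hτ => hCv τ hτ _) hs ht
  have hCv_nonneg : 0 ≤ Cv := (norm_nonneg _).trans (hCv a ⟨le_rfl, hab⟩ 0)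
  have htv : 0 ≤ tvNorm μ := ENNReal.toReal_nonneg
  have hexp : 1 ≤ Real.exp (∫ τ in t₀..b, (L τ : ℝ)) := Real.one_le_exp
    (intervalIntegral.integral_nonneg (hta.trans hab) fun τ _ => (L τ).coe_nonneg)
  calc fmNorm _ ≤ Cv * |t - s| * tvNorm μ :=
        fmNorm_map_sub_map_le μ (hmeas t ht) (hmeas s hs) hdisp
    _ = (Cv * 1) * tvNorm μ * |t - s| := by ring
    _ ≤ _ := by gcongr

/-- For a vector field `v` satisfying (V1)–(V3) with flow `Φ` and
push-forward operators `P^v_{t₀,t} μ = (Φ t₀ t)_# μ`, for any finite signed Borel measure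
`μ`, `t₀ ≥ 0` and bounded interval `I = [a,b] ⊂ [t₀,∞)`, the map `t ↦ P^v_{t₀,t} μ` is
Lipschitz in Fortet–Mourier norm:
`‖P^v_{t₀,t}μ − P^v_{t₀,s}μ‖_FM* ≤ (sup_I ‖v‖_∞ · exp ∫_{t₀}^{b} |v_τ|_L dτ) ‖μ‖_TV |t−s|`. -/
theorem pushforward_flow_lipschitz_in_time {d : ℕ}
    (v : ℝ → EuclideanSpace ℝ (Fin d) → EuclideanSpace ℝ (Fin d))
    (L : ℝ → NNReal) (hLc : Continuous fun τ => (L τ : ℝ))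
    (hcont : Continuous fun q : ℝ × EuclideanSpace ℝ (Fin d) => v q.1 q.2)
    (hLip : ∀ τ, LipschitzWith (L τ) (v τ))
    (Φ : ℝ → ℝ → EuclideanSpace ℝ (Fin d) → EuclideanSpace ℝ (Fin d))
    (hΦ0 : ∀ s x₀, Φ s s x₀ = x₀)
    (hΦode : ∀ s x₀ t, s ≤ t → HasDerivAt (fun u => Φ s u x₀) (v t (Φ s t x₀)) t)
    (t₀ a b Cv : ℝ) (ht₀ : 0 ≤ t₀) (hta : t₀ ≤ a) (hab : a ≤ b)
    (hCv : ∀ t ∈ Set.Icc a b, ∀ x, ‖v t x‖ ≤ Cv)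
    (μ : SignedMeasure (EuclideanSpace ℝ (Fin d))) :
    ∀ s ∈ Set.Icc a b, ∀ t ∈ Set.Icc a b,
      fmNorm (μ.map (Φ t₀ t) - μ.map (Φ t₀ s)) ≤
        (Cv * Real.exp (∫ τ in t₀..b, (L τ : ℝ))) * tvNorm μ * |t - s| :=
  pushforward_flow_lipschitz_in_time_general v L hLc hLip Φ hΦ0 hΦode t₀ a b Cv hta hab hCv μ
end
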